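/- Let X be a real random variable whose distribution is continuous at the point x (i.e., P(X = x) = 0). Then the Gil-Pelaez inversion formula holds: P(X ≤ x) = ½ − (1/π)·∫₀^∞ Im(exp(−i·t·x)·φ(t))/t dt, where the integral is an improper (principal value) integral and φ is the characteristic function of X. -/

import Mathlib

/-!
With `Y = X - x`, Fubini turns the truncated integral `∫_ε^a Im(e^{-itx} φ(t)) / t dt` into
`E[Si(aY) - Si(εY)]`, where `Si` is the sine integral. `Si` is bounded and tends to `±π/2` at
`±∞` (Dirichlet's integral, computed by writing `sin t / t = ∫_0^∞ sin t · e^{-ts} ds` and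
swapping the integrals), so by dominated convergence the expectation tends to
`π/2 · E[sign Y] = π (1/2 - P(X ≤ x))`, using `P(Y = 0) = 0`.
-/

open MeasureTheory Filter Set Real intervalIntegral Topology

noncomputable def sineIntegral (x : ℝ) : ℝ := ∫ t in 0..x, sinc t

lemma intervalIntegrable_sinc (a b : ℝ) : IntervalIntegrable sinc volume a b :=
  continuous_sinc.intervalIntegrable a b

@[fun_prop]
lemma continuous_sineIntegral : Continuous sineIntegral :=
  continuous_primitive intervalIntegrable_sinc 0

lemma abs_sineIntegral_le_abs (x : ℝ) : |sineIntegral x| ≤ |x| := by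
  simpa [sineIntegral] using norm_integral_le_of_norm_le_const (a := 0) (b := x) (f := sinc)
    fun t _ ↦ (Real.norm_eq_abs _).trans_le (abs_sinc_le_one t)

lemma sineIntegral_neg (x : ℝ) : sineIntegral (-x) = -sineIntegral x := by
  rw [sineIntegral, integral_symm, sineIntegral]
  simpa [sinc_neg] using congrArg Neg.neg (integral_comp_neg (a := 0) (b := x) sinc).symm

lemma sineIntegral_mul_sub_sineIntegral_mul (ε a y : ℝ) :
    sineIntegral (a * y) - sineIntegral (ε * y) = ∫ t in ε..a, sin (t * y) / t := by
  rcases eq_or_ne y 0 with rfl | hy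
  · simp
  have hsinc : ∀ᵐ t : ℝ, t ∈ uIoc ε a → y * sinc (t * y) = sin (t * y) / t := by
    filter_upwards [compl_mem_ae_iff.mpr (measure_singleton (0 : ℝ))] with t ht _
    rw [sinc_of_ne_zero (mul_ne_zero ht hy)]
    field_simp
  rw [← integral_congr_ae hsinc, intervalIntegral.integral_const_mul,
    integral_comp_mul_right sinc hy, smul_eq_mul, mul_inv_cancel_left₀ hy, sineIntegral,
    sineIntegral, integral_interval_sub_left (intervalIntegrable_sinc _ _)
      (intervalIntegrable_sinc _ _)]

/-- The value of `∫_a^∞ e^{-st} sin t dt`. -/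
noncomputable def sineIntegralTail (a s : ℝ) : ℝ :=
  exp (-a * s) * (cos a + s * sin a) / (1 + s ^ 2)

lemma integral_sin_mul_exp_neg_mul (a s : ℝ) :
    ∫ t in 0..a, sin t * exp (-t * s) = (1 + s ^ 2)⁻¹ - sineIntegralTail a s := by
  have hs : 1 + s ^ 2 ≠ 0 := by positivity
  have hderiv : ∀ t ∈ uIcc 0 a, HasDerivAt (fun u ↦ -sineIntegralTail u s)
      (sin t * exp (-t * s)) t := fun t _ ↦ by
    have hlin : HasDerivAt (fun u ↦ -u * s) (-s) t := by
      simpa using (hasDerivAt_id t).neg.mul_const s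
    have hcs : HasDerivAt (fun u ↦ cos u + s * sin u) (-sin t + s * cos t) t :=
      (hasDerivAt_cos t).add ((hasDerivAt_sin t).const_mul s)
    have H : HasDerivAt (fun u ↦ -sineIntegralTail u s) _ t :=
      ((hlin.exp.mul hcs).div_const (1 + s ^ 2)).neg
    convert H using 1
    field_simp
    ring
  rw [integral_eq_sub_of_hasDerivAt hderiv ((by fun_prop : Continuous _).intervalIntegrable _ _)]
  simp only [sineIntegralTail, neg_mul, neg_zero, zero_mul, exp_zero, cos_zero, sin_zero,
    mul_zero, add_zero, mul_one, one_div, sub_neg_eq_add]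
  ring

lemma integral_Ioi_exp_neg_mul {t : ℝ} (ht : 0 < t) : ∫ s in Ioi 0, exp (-t * s) = t⁻¹ := by
  simpa [neg_div_neg_eq] using integral_exp_mul_Ioi (neg_neg_of_pos ht) 0

lemma abs_sineIntegralTail_le (a : ℝ) {s : ℝ} (hs : 0 ≤ s) :
    |sineIntegralTail a s| ≤ 2 * exp (-a * s) := by
  have hden : 0 < 1 + s ^ 2 := by positivity
  have hnum : |cos a + s * sin a| ≤ 1 + s :=
    calc |cos a + s * sin a| ≤ |cos a| + |s| * |sin a| :=
          (abs_add_le _ _).trans_eq (by rw [abs_mul])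
      _ ≤ 1 + s := by
        rw [abs_of_nonneg hs]
        nlinarith [abs_cos_le_one a, abs_sin_le_one a]
  rw [sineIntegralTail, abs_div, abs_of_pos hden, abs_mul, abs_exp, div_le_iff₀ hden]
  calc exp (-a * s) * |cos a + s * sin a| ≤ exp (-a * s) * (1 + s) := by gcongr
    _ ≤ 2 * exp (-a * s) * (1 + s ^ 2) := by nlinarith [exp_pos (-a * s), sq_nonneg (2 * s - 1)]

lemma integrableOn_sineIntegralTail {a : ℝ} (ha : 0 < a) :
    IntegrableOn (sineIntegralTail a) (Ioi 0) := by
  refine ((exp_neg_integrableOn_Ioi 0 ha).const_mul 2).mono' ?_ ?_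
  · exact (Continuous.div (by fun_prop) (by fun_prop) fun s ↦ by positivity).aestronglyMeasurable
  · filter_upwards [ae_restrict_mem measurableSet_Ioi] with s hs
    exact abs_sineIntegralTail_le a (le_of_lt hs)

lemma integrable_sin_mul_exp_neg_mul (a : ℝ) :
    Integrable (Function.uncurry fun t s ↦ sin t * exp (-t * s))
      ((volume.restrict (Ioc 0 a)).prod (volume.restrict (Ioi 0))) := by
  rw [integrable_prod_iff (by fun_prop)]
  constructor
  · filter_upwards [ae_restrict_mem measurableSet_Ioc] with t ht
    exact (exp_neg_integrableOn_Ioi 0 ht.1).const_mul (sin t)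
  · refine (((intervalIntegrable_sinc 0 a).1).abs).congr ?_
    filter_upwards [ae_restrict_mem measurableSet_Ioc] with t ht
    simp only [Function.uncurry_apply_pair, norm_mul, norm_eq_abs, abs_exp]
    rw [MeasureTheory.integral_const_mul, integral_Ioi_exp_neg_mul ht.1,
      sinc_of_ne_zero ht.1.ne', abs_div, abs_of_pos ht.1, div_eq_mul_inv]

lemma sineIntegral_eq_pi_div_two_sub {a : ℝ} (ha : 0 < a) :
    sineIntegral a = π / 2 - ∫ s in Ioi 0, sineIntegralTail a s := by
  have hsinc : ∀ t ∈ Ioc 0 a, sinc t = ∫ s in Ioi 0, sin t * exp (-t * s) := fun t ht ↦ by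
    rw [MeasureTheory.integral_const_mul, integral_Ioi_exp_neg_mul ht.1,
      sinc_of_ne_zero ht.1.ne', div_eq_mul_inv]
  have hinner : ∀ s,
      ∫ t in Ioc 0 a, sin t * exp (-t * s) = (1 + s ^ 2)⁻¹ - sineIntegralTail a s := fun s ↦ by
    rw [← integral_of_le ha.le, integral_sin_mul_exp_neg_mul]
  calc sineIntegral a = ∫ t in Ioc 0 a, ∫ s in Ioi 0, sin t * exp (-t * s) := by
        rw [sineIntegral, integral_of_le ha.le, setIntegral_congr_fun measurableSet_Ioc hsinc]
    _ = ∫ s in Ioi 0, ((1 + s ^ 2)⁻¹ - sineIntegralTail a s) := by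
        simp_rw [integral_integral_swap (integrable_sin_mul_exp_neg_mul a), hinner]
    _ = π / 2 - ∫ s in Ioi 0, sineIntegralTail a s := by
        rw [integral_sub integrable_inv_one_add_sq.integrableOn (integrableOn_sineIntegralTail ha),
          integral_Ioi_inv_one_add_sq, arctan_zero, sub_zero]

lemma abs_sineIntegral_sub_pi_div_two_le {a : ℝ} (ha : 0 < a) :
    |sineIntegral a - π / 2| ≤ 2 / a := by
  rw [sineIntegral_eq_pi_div_two_sub ha, sub_sub_cancel_left, abs_neg]
  calc |∫ s in Ioi 0, sineIntegralTail a s| ≤ ∫ s in Ioi 0, 2 * exp (-a * s) := by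
        refine (norm_eq_abs _).symm.trans_le <|
          norm_integral_le_of_norm_le ((exp_neg_integrableOn_Ioi 0 ha).const_mul 2) ?_
        filter_upwards [ae_restrict_mem measurableSet_Ioi] with s hs
        exact abs_sineIntegralTail_le a (le_of_lt hs)
    _ = 2 / a := by
        rw [MeasureTheory.integral_const_mul, integral_Ioi_exp_neg_mul ha, div_eq_mul_inv]

lemma tendsto_sineIntegral_atTop : Tendsto sineIntegral atTop (𝓝 (π / 2)) := by
  refine tendsto_sub_nhds_zero_iff.mp
    (squeeze_zero_norm' ?_ ((tendsto_const_nhds (x := (2 : ℝ))).div_atTop tendsto_id))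
  filter_upwards [eventually_gt_atTop 0] with a ha
  exact abs_sineIntegral_sub_pi_div_two_le ha

lemma tendsto_sineIntegral_atBot : Tendsto sineIntegral atBot (𝓝 (-(π / 2))) := by
  simpa [Function.comp_def, sineIntegral_neg] using
    (tendsto_sineIntegral_atTop.comp tendsto_neg_atBot_atTop).neg

lemma abs_sineIntegral_le (x : ℝ) : |sineIntegral x| ≤ π / 2 + 2 := by
  wlog hx : 0 ≤ x generalizing x
  · simpa [sineIntegral_neg] using this (-x) (by linarith)
  rcases le_or_gt x 2 with hx2 | hx2
  · linarith [abs_sineIntegral_le_abs x, abs_of_nonneg hx, pi_pos]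
  · have h := abs_sineIntegral_sub_pi_div_two_le (by linarith : 0 < x)
    have : 2 / x ≤ 1 := (div_le_one (by linarith)).mpr hx2.le
    linarith [abs_sub_abs_le_abs_sub (sineIntegral x) (π / 2),
      abs_of_pos (by positivity : 0 < π / 2)]

lemma tendsto_sineIntegral_mul_sub {y : ℝ} (hy : y ≠ 0) :
    Tendsto (fun p : ℝ × ℝ ↦ sineIntegral (p.2 * y) - sineIntegral (p.1 * y))
      (𝓝[>] 0 ×ˢ atTop) (𝓝 (π / 2 * Real.sign y)) := by
  have hfst : Tendsto (fun p : ℝ × ℝ ↦ sineIntegral (p.1 * y)) (𝓝[>] 0 ×ˢ atTop) (𝓝 0) := by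
    have h := (continuous_sineIntegral.comp (continuous_mul_const y)).tendsto 0
    simpa [Function.comp_def, sineIntegral] using
      h.comp (tendsto_nhds_of_tendsto_nhdsWithin tendsto_fst)
  rcases hy.lt_or_gt with hneg | hpos
  · simpa [Real.sign_of_neg hneg] using
      (tendsto_sineIntegral_atBot.comp (tendsto_snd.atTop_mul_const_of_neg hneg)).sub hfst
  · simpa [Real.sign_of_pos hpos] using
      (tendsto_sineIntegral_atTop.comp (tendsto_snd.atTop_mul_const hpos)).sub hfst

section Probability

variable {Ω : Type*} [MeasurableSpace Ω] {μ : Measure Ω}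

lemma im_exp_neg_mul_integral_exp [IsFiniteMeasure μ] {X : Ω → ℝ} (hX : AEMeasurable X μ)
    (x t : ℝ) :
    (Complex.exp (-(Complex.I * t * x)) * ∫ ω, Complex.exp (Complex.I * t * X ω) ∂μ).im
      = ∫ ω, sin (t * (X ω - x)) ∂μ := by
  have hexp : ∀ ω, Complex.exp (-(Complex.I * t * x)) * Complex.exp (Complex.I * t * X ω)
      = Complex.exp ((t * (X ω - x) : ℝ) * Complex.I) := fun ω ↦ by
    rw [← Complex.exp_add]
    push_cast
    ring_nf
  have hint : Integrable (fun ω ↦ Complex.exp ((t * (X ω - x) : ℝ) * Complex.I)) μ :=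
    .of_bound (by fun_prop) 1 (.of_forall fun ω ↦ (Complex.norm_exp_ofReal_mul_I _).le)
  rw [← MeasureTheory.integral_const_mul]
  simp_rw [hexp]
  rw [← Complex.imCLM_apply, ← ContinuousLinearMap.integral_comp_comm _ hint]
  simp only [Complex.imCLM_apply, Complex.exp_ofReal_mul_I_im]

lemma integral_sign_sub [IsProbabilityMeasure μ] {X : Ω → ℝ} (hX : Measurable X) {x : ℝ}
    (hx : μ {ω | X ω = x} = 0) :
    ∫ ω, Real.sign (X ω - x) ∂μ = 1 - 2 * μ.real {ω | X ω ≤ x} := by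
  have hle : MeasurableSet {ω | X ω ≤ x} := hX measurableSet_Iic
  have hsign :
      (fun ω ↦ Real.sign (X ω - x)) =ᵐ[μ] fun ω ↦ 1 - 2 * {ω | X ω ≤ x}.indicator 1 ω := by
    filter_upwards [measure_eq_zero_iff_ae_notMem.mp hx] with ω hω
    rcases lt_or_gt_of_ne (hω : X ω ≠ x) with hlt | hgt
    · norm_num [Real.sign_of_neg (sub_neg.mpr hlt), hlt.le]
    · norm_num [Real.sign_of_pos (sub_pos.mpr hgt), hgt.not_ge]
  rw [integral_congr_ae hsign, integral_sub (integrable_const 1)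
    ((integrable_const 1).indicator hle |>.const_mul 2), MeasureTheory.integral_const_mul,
    integral_indicator_one hle]
  simp

variable [IsFiniteMeasure μ] {Y : Ω → ℝ}

lemma setIntegral_integral_sin_mul_div (hY : Measurable Y) {ε a : ℝ} (hε : 0 < ε)
    (hεa : ε ≤ a) :
    ∫ t in Ioc ε a, ∫ ω, sin (t * Y ω) / t ∂μ
      = ∫ ω, (sineIntegral (a * Y ω) - sineIntegral (ε * Y ω)) ∂μ := by
  have hbound :
      ∀ᵐ p ∂(volume.restrict (Ioc ε a)).prod μ, ‖sin (p.1 * Y p.2) / p.1‖ ≤ ε⁻¹ := by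
    rw [← Measure.restrict_univ (μ := μ), Measure.prod_restrict]
    filter_upwards [ae_restrict_mem (measurableSet_Ioc.prod MeasurableSet.univ)] with p hp
    have hp1 : 0 < p.1 := hε.trans hp.1.1
    rw [norm_div, norm_eq_abs, norm_of_nonneg hp1.le, div_le_iff₀ hp1]
    calc |sin (p.1 * Y p.2)| ≤ 1 := abs_sin_le_one _
      _ ≤ ε⁻¹ * p.1 := by rw [inv_mul_eq_div, one_le_div hε]; exact hp.1.1.le
  have hmeas : Measurable (Function.uncurry fun t ω ↦ sin (t * Y ω) / t) :=
    (measurable_fst.mul (hY.comp measurable_snd)).sin.div measurable_fst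
  rw [integral_integral_swap (Integrable.of_bound hmeas.aestronglyMeasurable _ hbound)]
  simp_rw [sineIntegral_mul_sub_sineIntegral_mul, integral_of_le hεa]

lemma tendsto_integral_sineIntegral_mul_sub (hY : Measurable Y) (hY0 : ∀ᵐ ω ∂μ, Y ω ≠ 0) :
    Tendsto (fun p : ℝ × ℝ ↦ ∫ ω, (sineIntegral (p.2 * Y ω) - sineIntegral (p.1 * Y ω)) ∂μ)
      (𝓝[>] 0 ×ˢ atTop) (𝓝 (∫ ω, π / 2 * Real.sign (Y ω) ∂μ)) := by
  refine tendsto_integral_filter_of_dominated_convergence (fun _ ↦ π + 4)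
    (.of_forall fun p ↦ by fun_prop) (.of_forall fun p ↦ .of_forall fun ω ↦ ?_)
    (integrable_const _) ?_
  · rw [norm_eq_abs]
    linarith [abs_sub (sineIntegral (p.2 * Y ω)) (sineIntegral (p.1 * Y ω)),
      abs_sineIntegral_le (p.2 * Y ω), abs_sineIntegral_le (p.1 * Y ω)]
  · filter_upwards [hY0] with ω hω
    exact tendsto_sineIntegral_mul_sub hω

end Probability

open MeasureTheory Complex Filter

theorem gil_pelaez_inversion {Ω : Type*} [MeasurableSpace Ω]
    (μ : Measure Ω) [IsProbabilityMeasure μ] (X : Ω → ℝ) (hX : Measurable X)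
    (x : ℝ) (hx : μ {ω | X ω = x} = 0)
    (φ : ℝ → ℂ)
    (hφ : ∀ t : ℝ, φ t = ∫ ω, Complex.exp (Complex.I * t * X ω) ∂μ) :
    Tendsto
      (fun p : ℝ × ℝ =>
        ∫ t in Set.Ioc p.1 p.2, (Complex.exp (-(Complex.I * t * x)) * φ t).im / t)
      ((nhdsWithin 0 (Set.Ioi 0)) ×ˢ atTop)
      (nhds (Real.pi * (1 / 2 - (μ {ω | X ω ≤ x}).toReal))) := by
  have hY0 : ∀ᵐ ω ∂μ, X ω - x ≠ 0 := by
    simpa [ae_iff, sub_eq_zero] using hx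
  have hlim := tendsto_integral_sineIntegral_mul_sub (hX.sub_const x) hY0
  have hval : ∫ ω, π / 2 * Real.sign (X ω - x) ∂μ = π * (1 / 2 - (μ {ω | X ω ≤ x}).toReal) := by
    rw [MeasureTheory.integral_const_mul, integral_sign_sub hX hx, measureReal_def]
    ring
  rw [hval] at hlim
  refine hlim.congr' ?_
  filter_upwards [prod_mem_prod (Ioo_mem_nhdsGT one_pos) (Ici_mem_atTop 1)]
  rintro ⟨ε, a⟩ ⟨⟨hε, hε1⟩, ha⟩
  simp only [hφ, im_exp_neg_mul_integral_exp hX.aemeasurable, ← MeasureTheory.integral_div]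
  exact (setIntegral_integral_sin_mul_div (hX.sub_const x) hε (hε1.le.trans ha)).symm
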